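/- arXiv:2311.18196 — 3 statements merged into one kernel-verified Lean document; each statement's English description precedes it below -/
import Mathlib

section
/- Let (A, m) be a Noetherian local commutative ring and let f ∈ m be a nonzerodivisor of A. Let E1, E2, E3 be finite free A-modules and let d1 : E1 → E2 and d2 : E2 → E3 be A-linear maps with d2 ∘ d1 = 0. If the induced sequence E1/fE1 → E2/fE2 → E3/fE3 is exact at the middle term (that is, for every x ∈ E2 with d2 x ∈ f·E3 there exist y ∈ E1 and z ∈ E2 with x = d1 y + f·z), then the original sequence is exact at the middle term: ker d2 = range d1. -/
/-! Lifting `x ∈ ker d₂` through exactness mod `f` writes it as `d₁ y + f z`, and since `f` is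
regular on `E₃` the element `z` again lies in `ker d₂`. Hence `ker d₂ ⊆ im d₁ + f · ker d₂`, and
Nakayama's lemma (with `ker d₂` finitely generated and `f` in the Jacobson radical) gives
`ker d₂ ⊆ im d₁`. -/

open LinearMap

theorem LinearMap.ker_le_range_sup_span_singleton_smul_ker {A E1 E2 E3 : Type*} [CommRing A]
    [AddCommGroup E1] [Module A E1] [AddCommGroup E2] [Module A E2]
    [AddCommGroup E3] [Module A E3] {f : A} (hf : IsSMulRegular E3 f)
    {d1 : E1 →ₗ[A] E2} {d2 : E2 →ₗ[A] E3} (hcomplex : ∀ x : E1, d2 (d1 x) = 0)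
    (hmodf : ∀ x : E2, (∃ z3 : E3, d2 x = f • z3) → ∃ (y : E1) (z : E2), x = d1 y + f • z) :
    ker d2 ≤ range d1 ⊔ Ideal.span {f} • ker d2 := by
  intro x hx
  obtain ⟨y, z, rfl⟩ := hmodf x ⟨0, by rw [smul_zero]; exact hx⟩
  have hz : z ∈ ker d2 := by
    refine hf.right_eq_zero_of_smul ?_
    simpa [hcomplex y] using hx
  exact Submodule.add_mem_sup (mem_range_self d1 y)
    (Submodule.smul_mem_smul (Ideal.mem_span_singleton_self f) hz)

theorem stmt0_general (A : Type*) [CommRing A] [IsNoetherianRing A] [IsLocalRing A]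
    (f : A) (hf_mem : f ∈ IsLocalRing.maximalIdeal A)
    (hf_nzd : ∀ a : A, f * a = 0 → a = 0)
    (E1 E2 E3 : Type*)
    [AddCommGroup E1] [Module A E1]
    [AddCommGroup E2] [Module A E2] [Module.Finite A E2]
    [AddCommGroup E3] [Module A E3] [Module.Free A E3]
    (d1 : E1 →ₗ[A] E2) (d2 : E2 →ₗ[A] E3)
    (hcomplex : ∀ x : E1, d2 (d1 x) = 0)
    (hmodf : ∀ x : E2, (∃ z3 : E3, d2 x = f • z3) →
      ∃ (y : E1) (z : E2), x = d1 y + f • z) :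
    LinearMap.ker d2 = LinearMap.range d1 := by
  have hf : IsSMulRegular E3 f :=
    Module.Flat.isSMulRegular_of_nonZeroDivisors (mem_nonZeroDivisors_iff_left.mpr hf_nzd)
  have hf_jacobson : Ideal.span {f} ≤ (⊥ : Ideal A).jacobson := by
    rw [IsLocalRing.jacobson_eq_maximalIdeal ⊥ bot_ne_top, Ideal.span_singleton_le_iff_mem]
    exact hf_mem
  refine le_antisymm ?_ (range_le_ker_iff.mpr (LinearMap.ext hcomplex))
  exact Submodule.le_of_le_smul_of_le_jacobson_bot (IsNoetherian.noetherian _) hf_jacobson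
    (ker_le_range_sup_span_singleton_smul_ker hf hcomplex hmodf)

/-- **Lemma 3.1 (Noetherian local case).**
Let `(A, m)` be a Noetherian local commutative ring and `f ∈ m` a nonzerodivisor.
Given a three-term complex `E1 → E2 → E3` of finite free `A`-modules which becomes
exact at the middle term after reduction mod `f`, the original complex is exact at
the middle term. -/
theorem stmt0 (A : Type*) [CommRing A] [IsNoetherianRing A] [IsLocalRing A]
    (f : A) (hf_mem : f ∈ IsLocalRing.maximalIdeal A)
    (hf_nzd : ∀ a : A, f * a = 0 → a = 0)
    (E1 E2 E3 : Type*)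
    [AddCommGroup E1] [Module A E1] [Module.Finite A E1] [Module.Free A E1]
    [AddCommGroup E2] [Module A E2] [Module.Finite A E2] [Module.Free A E2]
    [AddCommGroup E3] [Module A E3] [Module.Finite A E3] [Module.Free A E3]
    (d1 : E1 →ₗ[A] E2) (d2 : E2 →ₗ[A] E3)
    (hcomplex : ∀ x : E1, d2 (d1 x) = 0)
    (hmodf : ∀ x : E2, (∃ z3 : E3, d2 x = f • z3) →
      ∃ (y : E1) (z : E2), x = d1 y + f • z) :
    LinearMap.ker d2 = LinearMap.range d1 :=
  stmt0_general A f hf_mem hf_nzd E1 E2 E3 d1 d2 hcomplex hmodf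
end

section
/- Let A be a Noetherian local commutative ring, X a set, and u an ultrafilter on X, and let R be the ultrapower of A along u, i.e. the ring Filter.Germ (u : Filter X) A of germs of functions X → A along u. Let f ∈ R be a nonzerodivisor of R that is not a unit. Let E1, E2, E3 be finite free R-modules and let d1 : E1 → E2 and d2 : E2 → E3 be R-linear maps with d2 ∘ d1 = 0. If the induced sequence E1/fE1 → E2/fE2 → E3/fE3 is exact at the middle term (that is, for every x ∈ E2 with d2 x ∈ f·E3 there exist y ∈ E1 and z ∈ E2 with x = d1 y + f·z), then ker d2 = range d1. -/
/-!
Over a Noetherian local ring, exactness modulo a regular element `f` of the maximal ideal gives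
`ker d₂ ≤ range d₁ + f • ker d₂`, and Nakayama's lemma yields `ker d₂ = range d₁`.

Over the ultrapower `R = A^X/u`, choose bases and lift `f` and the matrices of `d₁`, `d₂` to
families `g x`, `N₁ x`, `N₂ x` over `A`. Every hypothesis only involves finitely many entries, so
by Łoś's theorem it holds in the fibre over `x` for `u`-almost every `x`. There the Noetherian
local case solves `N₁ x *ᵥ y x = v x`, and the germ of `y` solves the equation over `R`.
-/

open Filter LinearMap Matrix

/-- Exactness at `M₂` of the reduction `M₁/fM₁ → M₂/fM₂ → M₃/fM₃` of `M₁ → M₂ → M₃`. -/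
def ExactMod {R M₁ M₂ M₃ : Type*} [Semiring R] [AddCommMonoid M₁] [AddCommMonoid M₂]
    [AddCommMonoid M₃] [Module R M₁] [Module R M₂] [Module R M₃]
    (f : R) (d₁ : M₁ →ₗ[R] M₂) (d₂ : M₂ →ₗ[R] M₃) : Prop :=
  ∀ x, (∃ z, d₂ x = f • z) → ∃ y z, x = d₁ y + f • z

section ArrowCongr

variable {R M₁ M₂ M₃ N₁ N₂ N₃ : Type*} [CommSemiring R]
  [AddCommMonoid M₁] [AddCommMonoid M₂] [AddCommMonoid M₃]
  [AddCommMonoid N₁] [AddCommMonoid N₂] [AddCommMonoid N₃]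
  [Module R M₁] [Module R M₂] [Module R M₃] [Module R N₁] [Module R N₂] [Module R N₃]
  (e₁ : M₁ ≃ₗ[R] N₁) (e₂ : M₂ ≃ₗ[R] N₂) (e₃ : M₃ ≃ₗ[R] N₃)
  {d₁ : M₁ →ₗ[R] M₂} {d₂ : M₂ →ₗ[R] M₃}

theorem ExactMod.arrowCongr {f : R} (h : ExactMod f d₁ d₂) :
    ExactMod f (e₁.arrowCongr e₂ d₁) (e₂.arrowCongr e₃ d₂) := by
  rintro x ⟨z, hz⟩
  obtain ⟨y, z', hyz⟩ := h (e₂.symm x) ⟨e₃.symm z, by simpa using congr(e₃.symm $hz)⟩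
  exact ⟨e₁ y, e₂ z', by simpa using congr(e₂ $hyz)⟩

theorem LinearMap.ker_le_range_of_arrowCongr
    (h : ker (e₂.arrowCongr e₃ d₂) ≤ range (e₁.arrowCongr e₂ d₁)) : ker d₂ ≤ range d₁ := by
  intro x hx
  obtain ⟨y, hy⟩ := h (show e₂ x ∈ ker _ by simpa using hx)
  exact ⟨e₁.symm y, by simpa using congr(e₂.symm $hy)⟩

end ArrowCongr

theorem IsLocalRing.ker_le_range_of_exactMod {A M₁ M₂ M₃ : Type*} [CommRing A]
    [IsNoetherianRing A] [IsLocalRing A] [AddCommGroup M₁] [Module A M₁]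
    [AddCommGroup M₂] [Module A M₂] [Module.Finite A M₂] [AddCommGroup M₃] [Module A M₃]
    {f : A} (hf : f ∈ maximalIdeal A) (hreg : IsSMulRegular M₃ f)
    {d₁ : M₁ →ₗ[A] M₂} {d₂ : M₂ →ₗ[A] M₃} (hd : d₂ ∘ₗ d₁ = 0) (h : ExactMod f d₁ d₂) :
    ker d₂ ≤ range d₁ := by
  have hker : ker d₂ ≤ range d₁ ⊔ Ideal.span {f} • ker d₂ := by
    intro x hx
    obtain ⟨y, z, rfl⟩ := h x ⟨0, by rw [mem_ker.1 hx, smul_zero]⟩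
    have hz : z ∈ ker d₂ := by
      refine hreg.right_eq_zero_of_smul ?_
      simpa [← LinearMap.comp_apply, hd] using mem_ker.1 hx
    exact Submodule.add_mem_sup (mem_range_self d₁ y)
      (Submodule.smul_mem_smul (Ideal.mem_span_singleton_self f) hz)
  refine Submodule.le_of_le_smul_of_le_jacobson_bot (IsNoetherian.noetherian _) ?_ hker
  rwa [Ideal.span_le, Set.singleton_subset_iff, jacobson_eq_maximalIdeal ⊥ bot_ne_top]

/-- The step of Łoś's theorem for a universal quantifier; the existential step is
`Filter.Eventually.choice`. -/
theorem Ultrafilter.eventually_forall_iff {X β : Type*} {u : Ultrafilter X}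
    {p : X → β → Prop} :
    (∀ᶠ x in u, ∀ b, p x b) ↔ ∀ b : X → β, ∀ᶠ x in u, p x (b x) := by
  refine ⟨fun h b => h.mono fun x hx => hx (b x), fun h => ?_⟩
  by_contra hn
  have : ∀ᶠ x in u, ∃ b, ¬p x b := (eventually_not.2 hn).mono fun x hx => not_forall.1 hx
  obtain ⟨b, hb⟩ := this.choice
  exact ((h b).and hb).exists.elim fun x hx => hx.2 hx.1

namespace Filter.Germ

variable {X A : Type*} {l : Filter X} {ι κ : Type*}

def vec (v : X → ι → A) : ι → Germ l A := fun i => ↑(fun x => v x i)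

def matrix (N : X → Matrix κ ι A) : Matrix κ ι (Germ l A) :=
  Matrix.of fun j => vec fun x => N x j

theorem vec_surjective : Function.Surjective (vec : (X → ι → A) → ι → Germ l A) := by
  intro V
  choose v hv using fun i => Quot.exists_rep (V i)
  exact ⟨fun x i => v i x, funext hv⟩

theorem matrix_surjective :
    Function.Surjective (matrix : (X → Matrix κ ι A) → Matrix κ ι (Germ l A)) := by
  intro M
  choose v hv using fun j => vec_surjective (l := l) (M j)
  exact ⟨fun x j => v j x, funext hv⟩

theorem vec_eq_vec_iff [Finite ι] {v w : X → ι → A} :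
    (vec v : ι → Germ l A) = vec w ↔ ∀ᶠ x in l, v x = w x := by
  simp only [funext_iff, vec, coe_eq, EventuallyEq, eventually_all]

@[simp]
theorem vec_zero [Zero A] : (vec (fun _ => 0 : X → ι → A) : ι → Germ l A) = 0 := rfl

@[simp]
theorem vec_add [Add A] (v w : X → ι → A) :
    (vec (fun x => v x + w x) : ι → Germ l A) = vec v + vec w := rfl

@[simp]
theorem vec_smul [Mul A] (g : X → A) (v : X → ι → A) :
    (vec (fun x => g x • v x) : ι → Germ l A) = (g : Germ l A) • vec v := rfl

theorem matrix_mulVec [Fintype ι] [NonUnitalNonAssocSemiring A] (N : X → Matrix κ ι A)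
    (v : X → ι → A) : (matrix N : Matrix κ ι (Germ l A)) *ᵥ vec v = vec fun x => N x *ᵥ v x := by
  ext j
  simp only [mulVec, dotProduct, matrix, vec, of_apply, ← coe_mul]
  rw [← Finset.sum_fn]
  exact (map_sum (coeAddHom l : (X → A) →+ Germ l A) _ _).symm

variable {u : Ultrafilter X}

theorem eventually_not_isUnit [Monoid A] {g : X → A} (h : ¬IsUnit (g : Germ (u : Filter X) A)) :
    ∀ᶠ x in u, ¬IsUnit (g x) := by
  refine Ultrafilter.eventually_not.2 fun hg => h ?_
  obtain ⟨b, hb⟩ := (hg.mono fun x => isUnit_iff_exists.1).choice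
  exact isUnit_iff_exists.2
    ⟨b, coe_eq.2 (hb.mono fun _ => And.left), coe_eq.2 (hb.mono fun _ => And.right)⟩

theorem eventually_mem_nonZeroDivisorsLeft [MonoidWithZero A] {g : X → A}
    (h : (g : Germ (u : Filter X) A) ∈ nonZeroDivisorsLeft (Germ (u : Filter X) A)) :
    ∀ᶠ x in u, g x ∈ nonZeroDivisorsLeft A := by
  simp only [mem_nonZeroDivisorsLeft_iff] at h ⊢
  rw [Ultrafilter.eventually_forall_iff]
  intro a
  rw [Ultrafilter.eventually_imp]
  exact fun ha => coe_eq.1 (h a (coe_eq.2 ha))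

variable {ι₁ ι₂ ι₃ : Type*} [Fintype ι₁] [Fintype ι₂] [Finite ι₃]

theorem eventually_mulVecLin_comp_eq_zero [CommSemiring A]
    {N₁ : X → Matrix ι₂ ι₁ A} {N₂ : X → Matrix ι₃ ι₂ A}
    (h : (matrix N₂ : Matrix ι₃ ι₂ (Germ (u : Filter X) A)).mulVecLin ∘ₗ (matrix N₁).mulVecLin
      = 0) :
    ∀ᶠ x in u, (N₂ x).mulVecLin ∘ₗ (N₁ x).mulVecLin = 0 := by
  have : ∀ᶠ x in u, ∀ y, N₂ x *ᵥ (N₁ x *ᵥ y) = 0 := by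
    rw [Ultrafilter.eventually_forall_iff]
    intro y
    refine vec_eq_vec_iff.1 ?_
    rw [vec_zero, ← matrix_mulVec, ← matrix_mulVec]
    simpa using LinearMap.congr_fun h (vec y)
  exact this.mono fun x hx => LinearMap.ext hx

theorem eventually_exactMod [CommSemiring A] {g : X → A}
    {N₁ : X → Matrix ι₂ ι₁ A} {N₂ : X → Matrix ι₃ ι₂ A}
    (h : ExactMod (g : Germ (u : Filter X) A) (matrix N₁).mulVecLin (matrix N₂).mulVecLin) :
    ∀ᶠ x in u, ExactMod (g x) (N₁ x).mulVecLin (N₂ x).mulVecLin := by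
  simp only [ExactMod, mulVecLin_apply]
  rw [Ultrafilter.eventually_forall_iff]
  intro w
  rw [Ultrafilter.eventually_imp]
  intro hw
  obtain ⟨z, hz⟩ := hw.choice
  obtain ⟨y', z', hyz⟩ := h (vec w) ⟨vec z, by
    rw [mulVecLin_apply, matrix_mulVec, ← vec_smul, vec_eq_vec_iff]; exact hz⟩
  obtain ⟨y, rfl⟩ := vec_surjective y'
  obtain ⟨z', rfl⟩ := vec_surjective z'
  rw [mulVecLin_apply, matrix_mulVec, ← vec_smul, ← vec_add, vec_eq_vec_iff] at hyz
  exact hyz.mono fun x hx => ⟨y x, z' x, hx⟩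

theorem ker_le_range_of_exactMod [CommRing A] [IsNoetherianRing A] [IsLocalRing A]
    [DecidableEq ι₁] [DecidableEq ι₂] {f : Germ (u : Filter X) A} (hf : ¬IsUnit f)
    (hf_nzd : f ∈ nonZeroDivisorsLeft (Germ (u : Filter X) A))
    {D₁ : (ι₁ → Germ (u : Filter X) A) →ₗ[Germ (u : Filter X) A] ι₂ → Germ (u : Filter X) A}
    {D₂ : (ι₂ → Germ (u : Filter X) A) →ₗ[Germ (u : Filter X) A] ι₃ → Germ (u : Filter X) A}
    (hd : D₂ ∘ₗ D₁ = 0) (h : ExactMod f D₁ D₂) : LinearMap.ker D₂ ≤ LinearMap.range D₁ := by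
  obtain ⟨g, rfl⟩ : ∃ g : X → A, (g : Germ (u : Filter X) A) = f := Quot.exists_rep f
  obtain ⟨N₁, hN₁⟩ := matrix_surjective (toMatrix' D₁)
  obtain ⟨N₂, hN₂⟩ := matrix_surjective (toMatrix' D₂)
  obtain rfl : (matrix N₁).mulVecLin = D₁ := by rw [hN₁, ← toLin'_apply', toLin'_toMatrix']
  obtain rfl : (matrix N₂).mulVecLin = D₂ := by rw [hN₂, ← toLin'_apply', toLin'_toMatrix']
  have hfiber : ∀ᶠ x in u, LinearMap.ker (N₂ x).mulVecLin ≤ LinearMap.range (N₁ x).mulVecLin := by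
    filter_upwards [eventually_not_isUnit hf, eventually_mem_nonZeroDivisorsLeft hf_nzd,
      eventually_mulVecLin_comp_eq_zero hd, eventually_exactMod h] with x hunit hreg hdx hx
    refine IsLocalRing.ker_le_range_of_exactMod hunit ?_ hdx hx
    exact Pi.isSMulRegular_iff.2 fun _ =>
      .of_right_eq_zero_of_smul (M := A) ((mem_nonZeroDivisorsLeft_iff A).1 hreg)
  intro V hV
  obtain ⟨v, rfl⟩ := vec_surjective V
  have hv : ∀ᶠ x in u, N₂ x *ᵥ v x = 0 := by
    rw [LinearMap.mem_ker, mulVecLin_apply, matrix_mulVec, ← vec_zero] at hV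
    exact vec_eq_vec_iff.1 hV
  obtain ⟨y, hy⟩ := ((hfiber.and hv).mono fun x hx => hx.1 hx.2).choice
  exact ⟨vec y, by rw [mulVecLin_apply, matrix_mulVec, vec_eq_vec_iff]; exact hy⟩

end Filter.Germ

/-- **Lemma 3.1 (ultrapower case).**
Let `A` be a Noetherian local commutative ring, `u` an ultrafilter on a set `X`, and
`R = Filter.Germ u A` the ultrapower of `A` along `u`.  Let `f ∈ R` be a nonzerodivisor
which is not a unit.  Given a three-term complex `E1 → E2 → E3` of finite free
`R`-modules which becomes exact at the middle term after reduction mod `f`, the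
original complex is exact at the middle term. -/
theorem stmt1 (A : Type*) [CommRing A] [IsNoetherianRing A] [IsLocalRing A]
    (X : Type*) (u : Ultrafilter X)
    (f : Filter.Germ (u : Filter X) A)
    (hf_nzd : ∀ a : Filter.Germ (u : Filter X) A, f * a = 0 → a = 0)
    (hf_n_unit : ¬ IsUnit f)
    (E1 E2 E3 : Type*)
    [AddCommGroup E1] [Module (Filter.Germ (u : Filter X) A) E1]
    [Module.Finite (Filter.Germ (u : Filter X) A) E1]
    [Module.Free (Filter.Germ (u : Filter X) A) E1]
    [AddCommGroup E2] [Module (Filter.Germ (u : Filter X) A) E2]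
    [Module.Finite (Filter.Germ (u : Filter X) A) E2]
    [Module.Free (Filter.Germ (u : Filter X) A) E2]
    [AddCommGroup E3] [Module (Filter.Germ (u : Filter X) A) E3]
    [Module.Finite (Filter.Germ (u : Filter X) A) E3]
    [Module.Free (Filter.Germ (u : Filter X) A) E3]
    (d1 : E1 →ₗ[Filter.Germ (u : Filter X) A] E2)
    (d2 : E2 →ₗ[Filter.Germ (u : Filter X) A] E3)
    (hcomplex : ∀ x : E1, d2 (d1 x) = 0)
    (hmodf : ∀ x : E2, (∃ z3 : E3, d2 x = f • z3) →
      ∃ (y : E1) (z : E2), x = d1 y + f • z) :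
    LinearMap.ker d2 = LinearMap.range d1 := by
  classical
  let e₁ := (Module.Free.chooseBasis (Germ (u : Filter X) A) E1).equivFun
  let e₂ := (Module.Free.chooseBasis (Germ (u : Filter X) A) E2).equivFun
  let e₃ := (Module.Free.chooseBasis (Germ (u : Filter X) A) E3).equivFun
  have hd : d2 ∘ₗ d1 = 0 := LinearMap.ext hcomplex
  refine le_antisymm (ker_le_range_of_arrowCongr e₁ e₂ e₃ ?_) (range_le_ker_iff.2 hd)
  refine Germ.ker_le_range_of_exactMod hf_n_unit hf_nzd ?_ (ExactMod.arrowCongr e₁ e₂ e₃ hmodf)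
  rw [← LinearEquiv.arrowCongr_comp, hd, map_zero]
end

section
/- Let A be a Noetherian commutative ring, let f ∈ A be a nilpotent element, and let M be an A-module. If the f-torsion submodule {x ∈ M | f • x = 0} of M is a finitely generated A-module, then M is a finitely generated A-module. -/
private lemma fg_of_le_fg {A : Type*} [CommRing A] [IsNoetherianRing A]
    {M : Type*} [AddCommGroup M] [Module A M] {p q : Submodule A M}
    (hq : q.FG) (hle : p ≤ q) : p.FG := by
  haveI : IsNoetherian A q := isNoetherian_of_fg_of_noetherian q hq
  have h1 : (p.comap q.subtype).FG := IsNoetherian.noetherian _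
  have h2 : (p.comap q.subtype).map q.subtype = p := by
    rw [Submodule.map_comap_eq, Submodule.range_subtype, inf_eq_right.mpr hle]
  rw [← h2]
  exact h1.map _

/-- **From the proof of Lemma 5.4(i).**
Let `A` be a Noetherian ring, `f ∈ A` nilpotent, and `M` an `A`-module.  If the
`f`-torsion submodule `{x ∈ M | f • x = 0}` is finitely generated, then `M` is a
finitely generated `A`-module. -/
theorem stmt5 (A : Type*) [CommRing A] [IsNoetherianRing A]
    (f : A) (hf : IsNilpotent f)
    (M : Type*) [AddCommGroup M] [Module A M]
    (htor : (LinearMap.ker (LinearMap.lsmul A M f)).FG) :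
    Module.Finite A M := by
  obtain ⟨n, hn⟩ := hf
  have key : ∀ k : ℕ, (LinearMap.ker (LinearMap.lsmul A M (f ^ k))).FG := by
    intro k
    induction k with
    | zero =>
      convert Submodule.fg_bot (R := A) (M := M)
      rw [LinearMap.ker_eq_bot]
      intro x y hxy
      simpa using hxy
    | succ k ih =>
      apply Submodule.fg_of_fg_map_of_fg_inf_ker (LinearMap.lsmul A M f)
      · apply fg_of_le_fg ih
        rintro _ ⟨x, hx, rfl⟩
        simp only [LinearMap.mem_ker, LinearMap.lsmul_apply] at hx ⊢
        rw [smul_smul, ← pow_succ]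
        exact hx
      · exact fg_of_le_fg htor inf_le_right
  have : LinearMap.ker (LinearMap.lsmul A M (f ^ n)) = ⊤ := by
    rw [hn]; ext x; simp
  rw [Module.finite_def, ← this]
  exact key n
end
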